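/- There do not exist natural numbers p, q, m, h, k with p > 1, 0 < q < p, p = m^2, q = m*h - 1 where m and h are coprime, and p - q = m*k - 1 where m and k are coprime. (This is the arithmetic core of the proof that no contact structure on L(p,q) # L(p,p-q) has a symplectic filling by a rational homology ball: by Lisca's classification, a rational homology ball filling of the universally tight lens space L(p,q) forces (p,q) = (m^2, mh-1) with gcd(m,h)=1, and the same condition applied to L(p,p-q) is incompatible with it.) -/
import Mathlib


theorem no_lisca_pair :
    ¬ ∃ p q m h k : ℕ,
      p > 1 ∧ 0 < q ∧ q < p ∧
      p = m ^ 2 ∧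
      q = m * h - 1 ∧ Nat.Coprime m h ∧
      p - q = m * k - 1 ∧ Nat.Coprime m k := by
  rintro ⟨p, q, m, h, k, hp, hq, hqp, hpm, hqm, chh, hpq, chk⟩
  have hpm' : p = m * m := by rw [hpm]; ring
  have hsum : m * h + m * k = m * m + 2 := by omega
  have hdvd : m ∣ 2 := by
    have h1 : m ∣ m * h + m * k := ⟨h + k, by ring⟩
    rw [hsum] at h1
    exact (Nat.dvd_add_right ⟨m, rfl⟩).mp h1
  have hub : m ≤ 2 := Nat.le_of_dvd two_pos hdvd
  interval_cases m
  · omega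
  · omega
  · have h1 : Odd h := Nat.coprime_two_left.mp chh
    have h2 : Odd k := Nat.coprime_two_left.mp chk
    obtain ⟨a, ha⟩ := h1
    obtain ⟨b, hb⟩ := h2
    omega
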